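/- Every GMSC program of formula depth D can be transformed into an equivalent GMSC program in which (1) each terminal clause has body ⊥, (2) every iteration clause has the same formula depth max(3, D+2), and (3) in every conjunction subschema φ ∧ θ where neither conjunct is ⊤, both conjuncts have equal formula depth. -/

import Mathlib

/-- A finite directed node-labeled graph: finite node set `V`, out-neighbour
finsets `adj v`, and a labeling of nodes by sets of node label symbols from `α`. -/
structure LGraph (α : Type) : Type 1 where
  V : Type
  fintypeV : Fintype V
  adj : V → Finset V
  label : V → Set α

attribute [instance] LGraph.fintypeV

/-- Formulas of graded modal logic GML over node label symbols `α`: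
`⊤`, labels, negation, conjunction, and graded diamonds `◇_{≥k}`. -/
inductive GML (α : Type) : Type where
  | top : GML α
  | lab : α → GML α
  | neg : GML α → GML α
  | and : GML α → GML α → GML α
  | dia : ℕ → GML α → GML α

/-- Truth of a GML formula at a node of a labeled graph; `dia k φ` (`◇_{≥k}φ`)
holds iff at least `k` out-neighbours satisfy `φ`. -/
def GML.sat {α : Type} (G : LGraph α) : GML α → G.V → Prop
  | .top, _ => True
  | .lab p, v => p ∈ G.label v
  | .neg φ, v => ¬ GML.sat G φ v
  | .and φ ψ, v => GML.sat G φ v ∧ GML.sat G ψ v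
  | .dia k φ, v => ∃ s : Finset G.V, s ⊆ G.adj v ∧ k ≤ s.card ∧ ∀ u ∈ s, GML.sat G φ u

/-- `⊥` as a GML formula. -/
def GML.bot {α : Type} : GML α := .neg .top

/-- `□φ := ¬◇_{≥1}¬φ`. -/
def GML.box {α : Type} (φ : GML α) : GML α := .neg (.dia 1 (.neg φ))

/-- `◇_{=n}φ := ◇_{≥n}φ ∧ ¬◇_{≥n+1}φ`. -/
def GML.diaEq {α : Type} (n : ℕ) (φ : GML α) : GML α := .and (.dia n φ) (.neg (.dia (n + 1) φ))

/-- Schemata of GMSC over node label symbols `α` and head predicates (schema variables) `ν`. -/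
inductive Schema (α ν : Type) : Type where
  | top : Schema α ν
  | lab : α → Schema α ν
  | var : ν → Schema α ν
  | neg : Schema α ν → Schema α ν
  | and : Schema α ν → Schema α ν → Schema α ν
  | dia : ℕ → Schema α ν → Schema α ν

/-- Substituting a GML formula for each head predicate of a schema. -/
def Schema.subst {α ν : Type} (σ : ν → GML α) : Schema α ν → GML α
  | .top => .top
  | .lab p => .lab p
  | .var X => σ X
  | .neg φ => .neg (φ.subst σ)
  | .and φ ψ => .and (φ.subst σ) (ψ.subst σ)
  | .dia k φ => .dia k (φ.subst σ)

/-- A GMSC program over node label symbols `α` with head predicates `ν`: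
terminal clauses `X(0) :− term X`, iteration clauses `X :− iter X`, and a set
`app` of appointed predicates. -/
structure Program (α ν : Type) where
  term : ν → GML α
  iter : ν → Schema α ν
  app : Set ν

/-- The `n`-th iteration formula `Xⁿ` of a head predicate `X`: `X⁰` is the terminal body,
and `X^{n+1}` is the iteration body with each head predicate `Y` replaced by `Yⁿ`. -/
def Program.iterFormula {α ν : Type} (P : Program α ν) : ℕ → ν → GML α
  | 0 => P.term
  | n + 1 => fun X => (P.iter X).subst (P.iterFormula n)

/-- The program accepts `(G, w)` iff some appointed predicate's iteration formula is
true at `w` in some round. -/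
def Program.accepts {α ν : Type} (P : Program α ν) (G : LGraph α) (w : G.V) : Prop :=
  ∃ X ∈ P.app, ∃ n : ℕ, GML.sat G (P.iterFormula n X) w

/-- The formula depth of a GML formula: maximal nesting of `¬`, `∧`, `◇_{≥k}`. -/
def GML.fdepth {α : Type} : GML α → ℕ
  | .top => 0
  | .lab _ => 0
  | .neg φ => φ.fdepth + 1
  | .and φ ψ => max φ.fdepth ψ.fdepth + 1
  | .dia _ φ => φ.fdepth + 1

/-- The formula depth of a GMSC schema: maximal nesting of `¬`, `∧`, `◇_{≥k}`. -/
def Schema.fdepth {α ν : Type} : Schema α ν → ℕ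
  | .top => 0
  | .lab _ => 0
  | .var _ => 0
  | .neg φ => φ.fdepth + 1
  | .and φ ψ => max φ.fdepth ψ.fdepth + 1
  | .dia _ φ => φ.fdepth + 1

/-- A schema is balanced if in every conjunction subschema `φ ∧ θ` where neither conjunct
is `⊤`, both conjuncts have the same formula depth. -/
def Schema.balanced {α ν : Type} : Schema α ν → Prop
  | .top => True
  | .lab _ => True
  | .var _ => True
  | .neg φ => φ.balanced
  | .and φ ψ =>
      ((φ ≠ Schema.top ∧ ψ ≠ Schema.top) → φ.fdepth = ψ.fdepth) ∧ φ.balanced ∧ ψ.balanced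
  | .dia _ φ => φ.balanced

/-- The formula depth of a GMSC program: the maximum formula depth of its clause bodies. -/
def Program.fdepth {α ν : Type} [Fintype ν] (P : Program α ν) : ℕ :=
  Finset.univ.sup fun X : ν => max (P.term X).fdepth (P.iter X).fdepth

/-!
Padding `φ ↦ φ ∧ ⊤` raises the formula depth by one without changing the meaning, and `⊤`
conjuncts are exempt from the balance condition; so padding the shallower side of every
conjunction, and then the whole body, yields a balanced body of any prescribed depth at least
its own.

To make the terminal clauses `⊥`, `P` is simulated at half speed. In
`hold X ≡ ¬(after3 ∧ notIter X) ∧ ¬(early ∧ notTerm X)` the clocks `after3` and `early` select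
either the terminal body (stored negated in `notTerm X`) or the iteration body applied to `hold`
two rounds earlier (stored negated in `notIter X`). This case split has depth `3` whatever `P`
is, and makes `hold X` true in round `k + 2` iff `X^{k/2}` is; the appointed predicate
`out X ≡ after2 ∧ hold X` masks the junk value of `hold X` in round `1`.
-/

namespace GML

variable {α : Type}

@[simp] lemma sat_bot (G : LGraph α) (u : G.V) : ¬ GML.sat G GML.bot u := by
  simp [GML.bot, GML.sat]

lemma sat_dia_congr (G : LGraph α) {φ ψ : GML α} (h : ∀ v, GML.sat G φ v ↔ GML.sat G ψ v)
    (k : ℕ) (u : G.V) : GML.sat G (.dia k φ) u ↔ GML.sat G (.dia k ψ) u :=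
  exists_congr fun _ => and_congr_right' <| and_congr_right' <| forall₂_congr fun v _ => h v

def toSchema {ν : Type} : GML α → Schema α ν
  | .top => .top
  | .lab p => .lab p
  | .neg φ => .neg φ.toSchema
  | .and φ ψ => .and φ.toSchema ψ.toSchema
  | .dia k φ => .dia k φ.toSchema

@[simp] lemma subst_toSchema {ν : Type} (σ : ν → GML α) (φ : GML α) :
    (φ.toSchema : Schema α ν).subst σ = φ := by
  induction φ <;> simp [toSchema, Schema.subst, *]

@[simp] lemma fdepth_toSchema {ν : Type} (φ : GML α) :
    (φ.toSchema : Schema α ν).fdepth = φ.fdepth := by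
  induction φ <;> simp [toSchema, Schema.fdepth, GML.fdepth, *]

end GML

namespace Schema

variable {α ν : Type}

def rename {ν' : Type} (g : ν → ν') : Schema α ν → Schema α ν'
  | .top => .top
  | .lab p => .lab p
  | .var X => .var (g X)
  | .neg φ => .neg (φ.rename g)
  | .and φ ψ => .and (φ.rename g) (ψ.rename g)
  | .dia k φ => .dia k (φ.rename g)

@[simp] lemma subst_rename {ν' : Type} (g : ν → ν') (σ : ν' → GML α) (φ : Schema α ν) :
    (φ.rename g).subst σ = φ.subst (σ ∘ g) := by
  induction φ <;> simp [rename, subst, *]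

@[simp] lemma fdepth_rename {ν' : Type} (g : ν → ν') (φ : Schema α ν) :
    (φ.rename g).fdepth = φ.fdepth := by
  induction φ <;> simp [rename, fdepth, *]

lemma sat_subst_congr (G : LGraph α) {σ τ : ν → GML α}
    (h : ∀ Y u, GML.sat G (σ Y) u ↔ GML.sat G (τ Y) u) (φ : Schema α ν) (u : G.V) :
    GML.sat G (φ.subst σ) u ↔ GML.sat G (φ.subst τ) u := by
  induction φ generalizing u with
  | top | lab => rfl
  | var Y => exact h Y u
  | neg φ ih => exact not_congr (ih u)
  | and φ ψ ihφ ihψ => exact and_congr (ihφ u) (ihψ u)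
  | dia k φ ih => exact GML.sat_dia_congr G ih k u

def padTop : ℕ → Schema α ν → Schema α ν
  | 0, φ => φ
  | k + 1, φ => (padTop k φ).and .top

@[simp] lemma fdepth_padTop (k : ℕ) (φ : Schema α ν) : (padTop k φ).fdepth = φ.fdepth + k := by
  induction k with
  | zero => rfl
  | succ k ih => simp [padTop, fdepth, ih, Nat.add_assoc]

lemma balanced_padTop (k : ℕ) {φ : Schema α ν} (h : φ.balanced) : (padTop k φ).balanced := by
  induction k with
  | zero => exact h
  | succ k ih => exact ⟨fun hne => absurd rfl hne.2, ih, trivial⟩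

@[simp] lemma sat_subst_padTop (G : LGraph α) (σ : ν → GML α) (k : ℕ) (φ : Schema α ν)
    (u : G.V) : GML.sat G ((padTop k φ).subst σ) u ↔ GML.sat G (φ.subst σ) u := by
  induction k with
  | zero => rfl
  | succ k ih => simp [padTop, subst, GML.sat, ih]

def balance : Schema α ν → Schema α ν
  | .and φ ψ =>
      .and (padTop (ψ.fdepth - φ.fdepth) φ.balance) (padTop (φ.fdepth - ψ.fdepth) ψ.balance)
  | .neg φ => .neg φ.balance
  | .dia k φ => .dia k φ.balance
  | φ => φ

@[simp] lemma fdepth_balance (φ : Schema α ν) : φ.balance.fdepth = φ.fdepth := by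
  induction φ with
  | top | lab | var => rfl
  | neg φ ih | dia k φ ih => simp [balance, fdepth, ih]
  | and φ ψ ihφ ihψ => simp only [balance, fdepth, fdepth_padTop, ihφ, ihψ]; omega

lemma balanced_balance (φ : Schema α ν) : φ.balance.balanced := by
  induction φ with
  | top | lab | var => trivial
  | neg φ ih | dia k φ ih => exact ih
  | and φ ψ ihφ ihψ =>
    refine ⟨fun _ => ?_, balanced_padTop _ ihφ, balanced_padTop _ ihψ⟩
    simp only [fdepth_padTop, fdepth_balance]
    omega

@[simp] lemma sat_subst_balance (G : LGraph α) (σ : ν → GML α) (φ : Schema α ν) (u : G.V) :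
    GML.sat G (φ.balance.subst σ) u ↔ GML.sat G (φ.subst σ) u := by
  induction φ generalizing u with
  | top | lab | var => rfl
  | neg φ ih => exact not_congr (ih u)
  | and φ ψ ihφ ihψ =>
    simp only [balance, subst, GML.sat, sat_subst_padTop]
    exact and_congr (ihφ u) (ihψ u)
  | dia k φ ih => exact GML.sat_dia_congr G ih k u

def padTo (M : ℕ) (φ : Schema α ν) : Schema α ν := padTop (M - φ.fdepth) φ.balance

lemma fdepth_padTo {M : ℕ} {φ : Schema α ν} (h : φ.fdepth ≤ M) : (padTo M φ).fdepth = M := by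
  simp only [padTo, fdepth_padTop, fdepth_balance]
  omega

lemma balanced_padTo (M : ℕ) (φ : Schema α ν) : (padTo M φ).balanced :=
  balanced_padTop _ φ.balanced_balance

@[simp] lemma sat_subst_padTo (G : LGraph α) (σ : ν → GML α) (M : ℕ) (φ : Schema α ν)
    (u : G.V) : GML.sat G ((padTo M φ).subst σ) u ↔ GML.sat G (φ.subst σ) u := by
  simp [padTo]

end Schema

namespace Program

variable {α ν : Type}

lemma fdepth_term_le [Fintype ν] (P : Program α ν) (X : ν) : (P.term X).fdepth ≤ P.fdepth :=
  (le_max_left _ _).trans <|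
    Finset.le_sup (f := fun X => max (P.term X).fdepth (P.iter X).fdepth) (Finset.mem_univ X)

lemma fdepth_iter_le [Fintype ν] (P : Program α ν) (X : ν) : (P.iter X).fdepth ≤ P.fdepth :=
  (le_max_right _ _).trans <|
    Finset.le_sup (f := fun X => max (P.term X).fdepth (P.iter X).fdepth) (Finset.mem_univ X)

/-- `afterK` holds from round `K` on, `early` in rounds `1` and `2`. -/
inductive BalancedVar (ν : Type) : Type
  | after1 | after2 | after3 | early
  | notIter (X : ν) | notTerm (X : ν) | hold (X : ν) | out (X : ν)
  deriving Fintype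

open BalancedVar

def balancedBody (P : Program α ν) : BalancedVar ν → Schema α (BalancedVar ν)
  | after1 => .top
  | after2 => .var after1
  | after3 => .var after2
  | early => .neg (.var after2)
  | notIter X => .neg ((P.iter X).rename hold)
  | notTerm X => .neg (P.term X).toSchema
  | hold X => .and (.neg (.and (.var after3) (.var (notIter X))))
      (.neg (.and (.var early) (.var (notTerm X))))
  | out X => .and (.var after2) (.var (hold X))

lemma fdepth_balancedBody_le [Fintype ν] (P : Program α ν) (v : BalancedVar ν) :
    (P.balancedBody v).fdepth ≤ max 3 (P.fdepth + 2) := by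
  cases v with
  | notIter X =>
    have := P.fdepth_iter_le X
    simp only [balancedBody, Schema.fdepth, Schema.fdepth_rename]
    omega
  | notTerm X =>
    have := P.fdepth_term_le X
    simp only [balancedBody, Schema.fdepth, GML.fdepth_toSchema]
    omega
  | _ => simp [balancedBody, Schema.fdepth]

def balancedForm [Fintype ν] (P : Program α ν) : Program α (BalancedVar ν) where
  term _ := GML.bot
  iter v := (P.balancedBody v).padTo (max 3 (P.fdepth + 2))
  app := out '' P.app

section BalancedForm

variable [Fintype ν] (P : Program α ν) (G : LGraph α) (u : G.V)

lemma sat_balancedForm_zero (v : BalancedVar ν) :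
    ¬ GML.sat G (P.balancedForm.iterFormula 0 v) u :=
  GML.sat_bot G u

lemma sat_balancedForm_succ (n : ℕ) (v : BalancedVar ν) :
    GML.sat G (P.balancedForm.iterFormula (n + 1) v) u ↔
      GML.sat G ((P.balancedBody v).subst (P.balancedForm.iterFormula n)) u :=
  Schema.sat_subst_padTo G _ _ _ u

lemma sat_after1 (n : ℕ) : GML.sat G (P.balancedForm.iterFormula n after1) u ↔ 1 ≤ n := by
  cases n with
  | zero => simpa using P.sat_balancedForm_zero G u after1
  | succ n => simp [sat_balancedForm_succ, balancedBody, Schema.subst, GML.sat]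

lemma sat_after2 (n : ℕ) : GML.sat G (P.balancedForm.iterFormula n after2) u ↔ 2 ≤ n := by
  cases n with
  | zero => simpa using P.sat_balancedForm_zero G u after2
  | succ n => simp [sat_balancedForm_succ, balancedBody, Schema.subst, sat_after1]

lemma sat_after3 (n : ℕ) : GML.sat G (P.balancedForm.iterFormula n after3) u ↔ 3 ≤ n := by
  cases n with
  | zero => simpa using P.sat_balancedForm_zero G u after3
  | succ n => simp [sat_balancedForm_succ, balancedBody, Schema.subst, sat_after2]

lemma sat_early (n : ℕ) :
    GML.sat G (P.balancedForm.iterFormula n early) u ↔ n = 1 ∨ n = 2 := by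
  cases n with
  | zero => simpa using P.sat_balancedForm_zero G u early
  | succ n =>
    simp only [sat_balancedForm_succ, balancedBody, Schema.subst, GML.sat, sat_after2]
    omega

lemma sat_notTerm (n : ℕ) (X : ν) :
    GML.sat G (P.balancedForm.iterFormula n (notTerm X)) u ↔
      1 ≤ n ∧ ¬ GML.sat G (P.term X) u := by
  cases n with
  | zero => simpa using P.sat_balancedForm_zero G u (notTerm X)
  | succ n => simp [sat_balancedForm_succ, balancedBody, Schema.subst, GML.sat]

lemma sat_hold_succ (n : ℕ) (X : ν) :
    GML.sat G (P.balancedForm.iterFormula (n + 1) (hold X)) u ↔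
      (3 ≤ n → ¬ GML.sat G (P.balancedForm.iterFormula n (notIter X)) u) ∧
      (n = 1 ∨ n = 2 → GML.sat G (P.term X) u) := by
  simp only [sat_balancedForm_succ, balancedBody, Schema.subst, GML.sat, sat_after3, sat_early,
    sat_notTerm, not_and, not_not]
  exact and_congr_right' ⟨fun h hn => h hn (by omega), fun h hn _ => h hn⟩

lemma sat_hold_of_early {n : ℕ} (hn : n = 1 ∨ n = 2) (X : ν) :
    GML.sat G (P.balancedForm.iterFormula (n + 1) (hold X)) u ↔ GML.sat G (P.term X) u := by
  rw [sat_hold_succ]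
  exact ⟨fun h => h.2 hn, fun h => ⟨fun _ => by omega, fun _ => h⟩⟩

lemma sat_hold_add_four (m : ℕ) (X : ν) :
    GML.sat G (P.balancedForm.iterFormula (m + 4) (hold X)) u ↔
      GML.sat G ((P.iter X).subst fun Y => P.balancedForm.iterFormula (m + 2) (hold Y)) u := by
  rw [sat_hold_succ, sat_balancedForm_succ]
  simp only [balancedBody, Schema.subst, GML.sat, Schema.subst_rename, not_not]
  exact ⟨fun h => h.1 (by omega), fun h => ⟨fun _ => h, fun _ => by omega⟩⟩

theorem sat_hold (k : ℕ) (X : ν) :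
    GML.sat G (P.balancedForm.iterFormula (k + 2) (hold X)) u ↔
      GML.sat G (P.iterFormula (k / 2) X) u := by
  induction k using Nat.strong_induction_on generalizing X u with
  | _ k ih =>
    match k with
    | 0 => exact P.sat_hold_of_early G u (.inl rfl) X
    | 1 => exact P.sat_hold_of_early G u (.inr rfl) X
    | m + 2 =>
      rw [show (m + 2) / 2 = m / 2 + 1 by omega, sat_hold_add_four]
      exact Schema.sat_subst_congr G (fun Y v => ih m (by omega) v Y) (P.iter X) u

lemma sat_out (n : ℕ) (X : ν) :
    GML.sat G (P.balancedForm.iterFormula (n + 1) (out X)) u ↔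
      2 ≤ n ∧ GML.sat G (P.balancedForm.iterFormula n (hold X)) u := by
  simp [sat_balancedForm_succ, balancedBody, Schema.subst, GML.sat, sat_after2]

lemma exists_sat_out_iff (X : ν) :
    (∃ n, GML.sat G (P.balancedForm.iterFormula n (out X)) u) ↔
      ∃ m, GML.sat G (P.iterFormula m X) u := by
  constructor
  · rintro ⟨_ | n, h⟩
    · exact absurd h (P.sat_balancedForm_zero G u _)
    · obtain ⟨hn, h⟩ := (P.sat_out G u n X).1 h
      obtain ⟨k, rfl⟩ : ∃ k, n = k + 2 := ⟨n - 2, by omega⟩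
      exact ⟨k / 2, (P.sat_hold G u k X).1 h⟩
  · rintro ⟨m, h⟩
    refine ⟨2 * m + 3, (P.sat_out G u _ X).2 ⟨by omega, ?_⟩⟩
    rw [sat_hold, show 2 * m / 2 = m by omega]
    exact h

theorem accepts_balancedForm_iff (w : G.V) : P.balancedForm.accepts G w ↔ P.accepts G w := by
  rw [accepts, accepts, show P.balancedForm.app = out '' P.app from rfl, Set.exists_mem_image]
  simp only [exists_sat_out_iff]

end BalancedForm

end Program

/-- Every GMSC program of formula depth `D` can be transformed into an
equivalent GMSC program in which (1) each terminal clause has body `⊥`, (2) every iteration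
clause has formula depth exactly `max 3 (D+2)`, and (3) in every conjunction subschema whose
conjuncts are not `⊤`, both conjuncts have equal formula depth. -/
theorem gmsc_depth_balanced_form {α ν : Type} [Fintype ν] (P : Program α ν) :
    ∃ (ν' : Type) (_ : Fintype ν') (P' : Program α ν'),
      (∀ X : ν', P'.term X = GML.bot) ∧
      (∀ X : ν', (P'.iter X).fdepth = max 3 (P.fdepth + 2)) ∧
      (∀ X : ν', (P'.iter X).balanced) ∧
      (∀ (G : LGraph α) (w : G.V), P.accepts G w ↔ P'.accepts G w) :=
  ⟨_, inferInstance, P.balancedForm, fun _ => rfl,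
    fun v => Schema.fdepth_padTo (P.fdepth_balancedBody_le v),
    fun _ => Schema.balanced_padTo _ _,
    fun G w => (P.accepts_balancedForm_iff G w).symm⟩
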